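/- arXiv:1811.02498 — 3 statements merged into one kernel-verified Lean document; each statement's English description precedes it below -/
import Mathlib

section
/- There is a constant C > 0, depending only on r, with the following property. Let Y > 2, 0 < δ < 10^{−3}, and for each prime p ≤ Y let ω_p ∈ [−2, 2] and λ_p ∈ ℝ with |λ_p − ω_p| ≤ δ. Then max_{s∈K} | ∑_{p ≤ Y, p prime} ( Log(1 − λ_p p^{−s} + p^{−2s}) − Log(1 − ω_p p^{−s} + p^{−2s}) ) | ≤ C δ √Y. -/
/-!
For `|μ| ≤ 2 + 10⁻³` the roots of `x ^ 2 - μ x + 1` have product `1` and, by the parallelogram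
law, `‖a‖ ^ 2 + ‖b‖ ^ 2 ≤ 2 + 1 / 200`; hence `1 - μ x + x ^ 2 = (1 - a x) (1 - b x)` with
`‖a‖, ‖b‖ ≤ 1.04`. For `‖x‖ = p ^ (-Re s) ≤ 2 ^ (-1/2) < 0.71` the value thus stays at distance
`≥ 1/16` from `0` (and in the slit plane), so `μ ↦ Log (1 - μ x + x ^ 2)`, whose derivative is
`-x / (1 - μ x + x ^ 2)`, is `16 ‖x‖`-Lipschitz. Each summand is therefore at most
`16 δ p ^ (-1/2)`, and `∑_{n ≤ Y} n ^ (-1/2) ≤ 2 √Y`.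
-/

open Complex

lemma exists_factorization_one_sub_mul_add_sq {μ : ℝ} (hμ : |μ| ≤ 2 + 1 / 1000) :
    ∃ a b : ℂ, ‖a‖ ≤ 1.04 ∧ ‖b‖ ≤ 1.04 ∧
      ∀ x : ℂ, 1 - μ * x + x ^ 2 = (1 - a * x) * (1 - b * x) := by
  obtain ⟨w, hw⟩ := IsAlgClosed.exists_pow_nat_eq ((μ : ℂ) ^ 2 - 4) two_pos
  obtain ⟨a, b, hsum, hdiff, hab⟩ : ∃ a b : ℂ, a + b = μ ∧ a - b = w ∧ a * b = 1 :=
    ⟨(μ + w) / 2, (μ - w) / 2, by ring, by ring, by linear_combination -hw / 4⟩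
  have hnorm_ab : ‖a‖ * ‖b‖ = 1 := by rw [← norm_mul, hab, norm_one]
  have hsq : ‖a‖ ^ 2 + ‖b‖ ^ 2 ≤ 2 + 1 / 200 := by
    have hpar := parallelogram_law_with_norm ℝ a b
    have hw_norm : ‖w‖ ^ 2 = |μ ^ 2 - 4| := by
      rw [← norm_pow, hw, ← ofReal_pow, ← ofReal_ofNat, ← ofReal_sub, norm_real, Real.norm_eq_abs]
    rw [hsum, hdiff, hw_norm, norm_real, Real.norm_eq_abs, sq_abs] at hpar
    have hμ2 : μ ^ 2 ≤ (2 + 1 / 1000) ^ 2 := sq_le_sq' (abs_le.mp hμ).1 (abs_le.mp hμ).2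
    rcases abs_cases (μ ^ 2 - 4) with ⟨h, -⟩ | ⟨h, -⟩ <;> nlinarith
  have hle : ∀ u v : ℝ, 0 ≤ u → 0 ≤ v → u * v = 1 → u ^ 2 + v ^ 2 ≤ 2 + 1 / 200 → u ≤ 1.04 := by
    intro u v hu hv huv h
    have h1 : u + v ≤ 2.002 := by nlinarith
    have h2 : u - v ≤ 0.071 := by nlinarith
    linarith
  refine ⟨a, b, hle _ _ (norm_nonneg _) (norm_nonneg _) hnorm_ab hsq,
    hle _ _ (norm_nonneg _) (norm_nonneg _) (by rw [mul_comm, hnorm_ab]) (by linarith), ?_⟩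
  intro x
  linear_combination x * hsum - x ^ 2 * hab

lemma one_div_sixteen_le_norm_one_sub_mul_add_sq {μ : ℝ} (hμ : |μ| ≤ 2 + 1 / 1000) {x : ℂ}
    (hx : ‖x‖ ≤ 0.71) : 1 / 16 ≤ ‖1 - μ * x + x ^ 2‖ := by
  obtain ⟨a, b, ha, hb, hfac⟩ := exists_factorization_one_sub_mul_add_sq hμ
  have hfactor : ∀ c : ℂ, ‖c‖ ≤ 1.04 → 0.26 ≤ ‖1 - c * x‖ := fun c hc ↦ by
    have hcx : ‖c * x‖ ≤ 1.04 * 0.71 := by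
      rw [norm_mul]; exact mul_le_mul hc hx (norm_nonneg _) (by norm_num)
    have := norm_sub_norm_le (1 : ℂ) (c * x)
    rw [norm_one] at this
    linarith
  rw [hfac, norm_mul]
  nlinarith [hfactor a ha, hfactor b hb]

lemma one_sub_mul_add_sq_mem_slitPlane {μ : ℝ} (hμ : |μ| ≤ 2 + 1 / 1000) {x : ℂ}
    (hx : ‖x‖ ≤ 0.71) : 1 - μ * x + x ^ 2 ∈ slitPlane := by
  have hre : (1 - μ * x + x ^ 2).re = 1 - μ * x.re + x.re ^ 2 - x.im ^ 2 := by
    simp [sq]; ring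
  have him : (1 - μ * x + x ^ 2).im = x.im * (2 * x.re - μ) := by
    simp [sq]; ring
  rw [mem_slitPlane_iff, hre, him]
  by_cases hv : x.im * (2 * x.re - μ) = 0
  · left
    rcases mul_eq_zero.mp hv with h | h
    · -- `1 - μ t + t ^ 2 ≥ (1 - |t|) ^ 2 - |t| / 1000 > 0` for real `t` with `|t| ≤ 0.71`
      have ht : |x.re| ≤ 0.71 := (abs_re_le_norm x).trans hx
      have : μ * x.re ≤ (2 + 1 / 1000) * |x.re| := by
        calc μ * x.re ≤ |μ| * |x.re| := (le_abs_self _).trans (abs_mul _ _).le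
          _ ≤ _ := mul_le_mul_of_nonneg_right hμ (abs_nonneg _)
      rw [h, ← sq_abs x.re]
      nlinarith [abs_nonneg x.re]
    · -- on the line `μ = 2 Re x` the real part is `1 - ‖x‖ ^ 2`
      have := sq_norm_sub_sq_re x
      rw [show μ = 2 * x.re by linarith]
      nlinarith [norm_nonneg x]
  · exact Or.inr hv

lemma norm_log_one_sub_mul_add_sq_sub_le {μ ν : ℝ} (hμ : |μ| ≤ 2 + 1 / 1000)
    (hν : |ν| ≤ 2 + 1 / 1000) {x : ℂ} (hx : ‖x‖ ≤ 0.71) :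
    ‖log (1 - ν * x + x ^ 2) - log (1 - μ * x + x ^ 2)‖ ≤ 16 * ‖x‖ * |ν - μ| := by
  have hbound : ∀ t ∈ Set.uIcc μ ν, |t| ≤ 2 + 1 / 1000 := fun t ht ↦
    abs_le.mpr (Set.uIcc_subset_Icc (abs_le.mp hμ) (abs_le.mp hν) ht)
  have hderiv : ∀ t ∈ Set.uIcc μ ν, HasDerivWithinAt (fun u : ℝ ↦ log (1 - u * x + x ^ 2))
      (-x / (1 - t * x + x ^ 2)) (Set.uIcc μ ν) t := fun t ht ↦ by
    have hq : HasDerivAt (fun u : ℝ ↦ 1 - (u : ℂ) * x + x ^ 2) (-x) t := by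
      simpa using (((hasDerivAt_id (t : ℂ)).comp_ofReal.mul_const x).const_sub 1).add_const
        (x ^ 2)
    exact (hq.clog_real (one_sub_mul_add_sq_mem_slitPlane (hbound t ht) hx)).hasDerivWithinAt
  have hderiv_le : ∀ t ∈ Set.uIcc μ ν, ‖-x / (1 - t * x + x ^ 2)‖ ≤ 16 * ‖x‖ := fun t ht ↦ by
    have hlow := one_div_sixteen_le_norm_one_sub_mul_add_sq (hbound t ht) hx
    rw [norm_div, norm_neg, div_le_iff₀ (by linarith)]
    nlinarith [norm_nonneg x]
  simpa [Real.norm_eq_abs] using (convex_uIcc μ ν).norm_image_sub_le_of_norm_hasDerivWithin_le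
    hderiv hderiv_le Set.left_mem_uIcc Set.right_mem_uIcc

lemma norm_natCast_cpow_neg_le_inv_sqrt {n : ℕ} (hn : 0 < n) {s : ℂ} (hs : 1 / 2 ≤ s.re) :
    ‖(n : ℂ) ^ (-s)‖ ≤ (√n)⁻¹ := by
  rw [norm_natCast_cpow_of_pos hn, Real.sqrt_eq_rpow, ← Real.rpow_neg (Nat.cast_nonneg n), neg_re]
  exact Real.rpow_le_rpow_of_exponent_le (by exact_mod_cast hn) (by linarith)

lemma sum_range_inv_sqrt_le (N : ℕ) : ∑ n ∈ Finset.range (N + 1), (√n)⁻¹ ≤ 2 * √N := by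
  induction N with
  | zero => simp
  | succ N ih =>
    rw [Finset.sum_range_succ]
    -- `(√(N+1))⁻¹ ≤ 2 (√(N+1) - √N)` amounts to `2 √N √(N+1) ≤ 2N + 1`
    have hstep : (√(N + 1 : ℕ))⁻¹ ≤ 2 * √(N + 1 : ℕ) - 2 * √N := by
      have hpos : 0 < √(N + 1 : ℕ) := Real.sqrt_pos.mpr (by positivity)
      rw [inv_le_iff_one_le_mul₀ hpos]
      nlinarith [Real.sq_sqrt (Nat.cast_nonneg (N + 1)), Real.sq_sqrt (Nat.cast_nonneg N),
        sq_nonneg (√(N + 1 : ℕ) - √N), Nat.cast_succ (R := ℝ) N]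
    linarith

lemma re_sub_le_re_of_mem_closedBall {c s : ℂ} {r : ℝ} (hs : s ∈ Metric.closedBall c r) :
    c.re - r ≤ s.re := by
  have := (abs_le.mp ((abs_re_le_norm (s - c)).trans (mem_closedBall_iff_norm.mp hs))).1
  rw [sub_re] at this
  linarith

lemma inv_sqrt_le_of_two_le {x : ℝ} (hx : 2 ≤ x) : (√x)⁻¹ ≤ 0.71 := by
  have h2 : 1.41 ≤ √x := Real.le_sqrt_of_sq_le (by linarith)
  rw [inv_le_iff_one_le_mul₀ (by linarith)]
  linarith

lemma norm_log_sub_log_natCast_cpow_le {n : ℕ} (hn : 2 ≤ n) {s : ℂ} (hs : 1 / 2 ≤ s.re)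
    {μ ν : ℝ} (hμ : |μ| ≤ 2 + 1 / 1000) (hν : |ν| ≤ 2 + 1 / 1000) :
    ‖log (1 - ν * (n : ℂ) ^ (-s) + (n : ℂ) ^ (-(2 * s)))
      - log (1 - μ * (n : ℂ) ^ (-s) + (n : ℂ) ^ (-(2 * s)))‖ ≤ 16 * (√n)⁻¹ * |ν - μ| := by
  have hx := norm_natCast_cpow_neg_le_inv_sqrt (n := n) (by omega) hs
  rw [show -(2 * s) = (2 : ℕ) * -s by push_cast; ring, cpow_nat_mul]
  calc _ ≤ 16 * ‖(n : ℂ) ^ (-s)‖ * |ν - μ| := norm_log_one_sub_mul_add_sq_sub_le hμ hν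
        (hx.trans (inv_sqrt_le_of_two_le (by exact_mod_cast hn)))
    _ ≤ 16 * (√n)⁻¹ * |ν - μ| := by gcongr

theorem stmt3_general (r : ℝ) (hr : r < 1 / 4) :
    ∃ C : ℝ, 0 < C ∧
      ∀ Y : ℝ, 2 < Y → ∀ δ : ℝ, 0 < δ → δ < 1 / 1000 →
        ∀ ω lam : ℕ → ℝ,
          (∀ p : ℕ, p.Prime → (p : ℝ) ≤ Y → ω p ∈ Set.Icc (-2 : ℝ) 2 ∧ |lam p - ω p| ≤ δ) →
          ∀ s ∈ Metric.closedBall (3 / 4 : ℂ) r,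
            ‖(∑ p ∈ (Finset.range (⌊Y⌋₊ + 1)).filter
                (fun p : ℕ => p.Prime ∧ (p : ℝ) ≤ Y),
              (Complex.log (1 - (lam p : ℂ) * (p : ℂ) ^ (-s) + (p : ℂ) ^ (-(2 * s)))
                - Complex.log (1 - (ω p : ℂ) * (p : ℂ) ^ (-s) + (p : ℂ) ^ (-(2 * s)))))‖
            ≤ C * δ * Real.sqrt Y := by
  refine ⟨32, by norm_num, fun Y hY δ hδ hδ' ω lam hωlam s hs ↦ ?_⟩
  have hs_re : 1 / 2 ≤ s.re := by
    have := re_sub_le_re_of_mem_closedBall hs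
    norm_num at this
    linarith
  have hterm : ∀ p ∈ (Finset.range (⌊Y⌋₊ + 1)).filter (fun p : ℕ => p.Prime ∧ (p : ℝ) ≤ Y),
      ‖log (1 - lam p * (p : ℂ) ^ (-s) + (p : ℂ) ^ (-(2 * s)))
        - log (1 - ω p * (p : ℂ) ^ (-s) + (p : ℂ) ^ (-(2 * s)))‖ ≤ 16 * δ * (√p)⁻¹ := by
    intro p hp
    obtain ⟨hp_prime, hpY⟩ := (Finset.mem_filter.mp hp).2
    obtain ⟨hω, hlam⟩ := hωlam p hp_prime hpY
    have hω' : |ω p| ≤ 2 + 1 / 1000 := by rw [abs_le]; constructor <;> linarith [hω.1, hω.2]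
    have hlam' : |lam p| ≤ 2 + 1 / 1000 := by
      linarith [abs_sub_abs_le_abs_sub (lam p) (ω p), abs_le.mpr hω]
    calc _ ≤ 16 * (√p)⁻¹ * |lam p - ω p| :=
          norm_log_sub_log_natCast_cpow_le hp_prime.two_le hs_re hω' hlam'
      _ ≤ 16 * δ * (√p)⁻¹ := by rw [mul_right_comm]; gcongr
  calc _ ≤ _ := norm_sum_le _ _
    _ ≤ _ := Finset.sum_le_sum hterm
    _ ≤ ∑ n ∈ Finset.range (⌊Y⌋₊ + 1), 16 * δ * (√n)⁻¹ :=
        Finset.sum_le_sum_of_subset_of_nonneg (Finset.filter_subset _ _) fun _ _ _ ↦ by positivity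
    _ = 16 * δ * ∑ n ∈ Finset.range (⌊Y⌋₊ + 1), (√n)⁻¹ := (Finset.mul_sum _ _ _).symm
    _ ≤ 16 * δ * (2 * √⌊Y⌋₊) := by gcongr; exact sum_range_inv_sqrt_le _
    _ ≤ 32 * δ * √Y := by
        have : √⌊Y⌋₊ ≤ √Y := Real.sqrt_le_sqrt (Nat.floor_le (by linarith))
        nlinarith

/-- There is a constant `C > 0`, depending only on `r`, such that for
all `Y > 2`, `0 < δ < 10⁻³`, and reals `ω p ∈ [-2,2]`, `lam p` with `|lam p - ω p| ≤ δ`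
for the primes `p ≤ Y`, one has
`max_{s ∈ K} |∑_{p ≤ Y} (Log (1 - lam p · p^{-s} + p^{-2s}) - Log (1 - ω p · p^{-s} + p^{-2s}))|
  ≤ C δ √Y`, where `K` is the closed disc `{|s - 3/4| ≤ r}` with `0 < r < 1/4`. -/
theorem stmt3 (r : ℝ) (hr0 : 0 < r) (hr : r < 1 / 4) :
    ∃ C : ℝ, 0 < C ∧
      ∀ Y : ℝ, 2 < Y → ∀ δ : ℝ, 0 < δ → δ < 1 / 1000 →
        ∀ ω lam : ℕ → ℝ,
          (∀ p : ℕ, p.Prime → (p : ℝ) ≤ Y → ω p ∈ Set.Icc (-2 : ℝ) 2 ∧ |lam p - ω p| ≤ δ) →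
          ∀ s ∈ Metric.closedBall (3 / 4 : ℂ) r,
            ‖(∑ p ∈ (Finset.range (⌊Y⌋₊ + 1)).filter
                (fun p : ℕ => p.Prime ∧ (p : ℝ) ≤ Y),
              (Complex.log (1 - (lam p : ℂ) * (p : ℂ) ^ (-s) + (p : ℂ) ^ (-(2 * s)))
                - Complex.log (1 - (ω p : ℂ) * (p : ℂ) ^ (-s) + (p : ℂ) ^ (-(2 * s)))))‖
            ≤ C * δ * Real.sqrt Y :=
  stmt3_general r hr
end

section
/- Let X = ∏_p [−n(p), n(p)] and μ = ⊗_p μ_p, and let (x_j)_{j≥1} be a sequence in X that is equidistributed with respect to μ, i.e. for every continuous φ : X → ℝ, lim_{N→∞} (1/N) ∑_{j=1}^{N} φ(x_j) = ∫_X φ dμ. Fix r ∈ (0, 1/4), let K be the closed disc {s ∈ ℂ : |s − 3/4| ≤ r}, and fix reals Y and X₁ with 2^{1/(1/4−r)} < Y < X₁. For x ∈ X define F(x) = max_{s∈K} | ∑_{Y < p ≤ X₁, p prime} Log(1 − x(p) p^{−s} + p^{−2s}) |; F is a well-defined continuous function on X. Then for every δ > 0 and every choice of ω_p ∈ [−2,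 2] for primes p ≤ Y, limsup_{N→∞} (1/N) ∑_{j ≤ N, |x_j(p) − ω_p| ≤ δ for all primes p ≤ Y} F(x_j) ≤ ( ∏_{p ≤ Y} μ_p([ω_p − δ, ω_p + δ]) ) · ∫_X F dμ. -/
open scoped Classical
open MeasureTheory Filter

/-- `n(p) = p^{1/2} + p^{-1/2}`. -/
noncomputable def np (p : ℕ) : ℝ := (p : ℝ) ^ ((1 : ℝ) / 2) + (p : ℝ) ^ (-(1 : ℝ) / 2)

/-- The density of the measure `μ_p`: it equals
`(1/(2π)) (1+p) √(4-x²)/(n(p)² - x²)` for `|x| ≤ 2` and vanishes outside `[-2,2]`. -/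
noncomputable def dens (p : ℕ) (x : ℝ) : ℝ :=
  1 / (2 * Real.pi) * (1 + (p : ℝ)) * Real.sqrt (4 - x ^ 2) / (np p ^ 2 - x ^ 2)

/-- The measure `μ_p` on `ℝ` (supported in `[-2,2] ⊆ [-n(p), n(p)]`). -/
noncomputable def μp (p : ℕ) : Measure ℝ := volume.withDensity fun x => ENNReal.ofReal (dens p x)

/-- `F x = max_{s ∈ K} |∑_{Y < p ≤ X₁} Log (1 - x(p) p^{-s} + p^{-2s})|`, where
`K` is the closed disc `{|s - 3/4| ≤ r}`. -/
noncomputable def Ffun (r Y X₁ : ℝ)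
    (x : (p : Nat.Primes) → Set.Icc (-(np (p : ℕ))) (np (p : ℕ))) : ℝ :=
  sSup ((fun s : ℂ => ‖
      (∑ p ∈ (Finset.range (⌊X₁⌋₊ + 1)).filter
          (fun p : ℕ => p.Prime ∧ Y < (p : ℝ) ∧ (p : ℝ) ≤ X₁),
        Complex.log (1 - (if hp : p.Prime then ((x ⟨p, hp⟩ : ℝ) : ℂ) else 0) * (p : ℂ) ^ (-s)
          + (p : ℂ) ^ (-(2 * s))))‖) '' Metric.closedBall (3 / 4 : ℂ) r)

/-!
The factor `1 - x(p) p^{-s} + p^{-2s}` stays in the disc `|w - 1| < 1` for `p > Y` and `s ∈ K`,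
since `t = p^{-(1/4-r)} < 1/2` bounds `|x(p) p^{-s}|` by `t + t²` and `|p^{-2s}|` by `t²`; so the
logarithms are continuous and `F`, a maximum over a compact set, is continuous.

For the bound, majorise the indicator of the box `|x(p) - ω_p| ≤ δ` (`p ≤ Y`) by a continuous
cutoff `Φ(x) = ∏_{p ≤ Y} g_p(x(p))` supported in the box widened by `η`. Equidistribution
applied to `Φ F` bounds the limsup by `∫ Φ F dμ`. Under the product measure the coordinates
are independent, and `Φ` and `F` depend on the disjoint sets of primes `p ≤ Y` and
`Y < p ≤ X₁`, so `∫ Φ F = ∫ Φ · ∫ F ≤ ∏_{p ≤ Y} μ_p([ω_p - δ - η, ω_p + δ + η]) · ∫ F`.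
Finally let `η → 0`.
-/

open ProbabilityTheory Set Topology

theorem IsCompact.continuous_sSup_of_continuousOn {α β γ : Type*}
    [ConditionallyCompleteLinearOrder α] [TopologicalSpace α] [OrderTopology α]
    [TopologicalSpace β] [TopologicalSpace γ] {f : γ → β → α} {K : Set β} (hK : IsCompact K)
    (hf : ContinuousOn (fun q : γ × β => f q.1 q.2) (univ ×ˢ K)) :
    Continuous fun x => sSup (f x '' K) := by
  have := isCompact_iff_compactSpace.1 hK
  have key := isCompact_univ.continuous_sSup (f := fun x (s : K) => f x s)
    (hf.comp_continuous (continuous_fst.prodMk (continuous_subtype_val.comp continuous_snd))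
      fun q : γ × K => ⟨mem_univ _, q.2.2⟩)
  simpa only [image_univ, ← image_eq_range] using key

theorem tendsto_measure_Icc_sub_add {ν : Measure ℝ} [IsFiniteMeasure ν] (a b : ℝ) :
    Tendsto (fun η => ν (Icc (a - η) (b + η))) (𝓝[>] 0) (𝓝 (ν (Icc a b))) := by
  have hInter : ⋂ η > (0 : ℝ), Icc (a - η) (b + η) = Icc a b := by
    ext t
    simp only [mem_iInter, mem_Icc]
    refine ⟨fun h => ⟨le_of_forall_pos_le_add fun η hη => ?_, le_of_forall_pos_le_add
      fun η hη => (h η hη).2⟩, fun h η hη => ⟨by linarith [h.1], by linarith [h.2]⟩⟩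
    linarith [(h η hη).1]
  rw [← hInter]
  exact tendsto_measure_biInter_gt (fun _ _ => measurableSet_Icc.nullMeasurableSet)
    (fun _ _ _ hij => Icc_subset_Icc (by linarith) (by linarith)) ⟨1, one_pos, measure_ne_top _ _⟩

theorem exists_continuous_cutoff (c δ : ℝ) {η : ℝ} (hη : 0 < η) :
    ∃ g : ℝ → ℝ, Continuous g ∧ (∀ t, g t ∈ Icc 0 1) ∧ EqOn g 1 (Icc (c - δ) (c + δ)) ∧
      EqOn g 0 (Icc (c - δ - η) (c + δ + η))ᶜ := by
  obtain ⟨g, hg0, hg1, hg⟩ := exists_continuous_zero_one_of_isClosed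
    isOpen_Ioo.isClosed_compl isClosed_Icc (s := (Ioo (c - δ - η) (c + δ + η))ᶜ)
    (t := Icc (c - δ) (c + δ)) (disjoint_compl_left_iff_subset.2
      (Icc_subset_Ioo (by linarith) (by linarith)))
  exact ⟨g, g.continuous, hg, hg1, hg0.mono (compl_subset_compl.2 Ioo_subset_Icc_self)⟩

theorem limsup_sum_filter_div_le_integral {X : Type*} [MeasurableSpace X] {μ : Measure X}
    {x : ℕ → X} {P : ℕ → Prop} [DecidablePred P] {F Φ : X → ℝ} (hF : 0 ≤ F) (hΦ : 0 ≤ Φ)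
    (hΦP : ∀ j, P j → Φ (x j) = 1)
    (hlim : Tendsto (fun N : ℕ => (∑ j ∈ Finset.Icc 1 N, Φ (x j) * F (x j)) / N) atTop
      (𝓝 (∫ y, Φ y * F y ∂μ))) :
    limsup (fun N : ℕ => (∑ j ∈ (Finset.Icc 1 N).filter P, F (x j)) / N) atTop
      ≤ ∫ y, Φ y * F y ∂μ := by
  have hle (N : ℕ) : ∑ j ∈ (Finset.Icc 1 N).filter P, F (x j)
      ≤ ∑ j ∈ Finset.Icc 1 N, Φ (x j) * F (x j) := calc
    _ = ∑ j ∈ (Finset.Icc 1 N).filter P, Φ (x j) * F (x j) :=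
      Finset.sum_congr rfl fun j hj => by rw [hΦP j (Finset.mem_filter.1 hj).2, one_mul]
    _ ≤ _ := Finset.sum_le_sum_of_subset_of_nonneg (Finset.filter_subset _ _)
      fun j _ _ => mul_nonneg (hΦ _) (hF _)
  refine (limsup_le_limsup (Eventually.of_forall fun N => div_le_div_of_nonneg_right (hle N)
    N.cast_nonneg) ?_ hlim.isBoundedUnder_le).trans_eq hlim.limsup_eq
  exact isCoboundedUnder_le_of_le atTop fun N =>
    div_nonneg (Finset.sum_nonneg fun j _ => hF _) N.cast_nonneg

theorem iIndepFun_of_measure_iInter_preimage_eq_prod {Ω ι : Type*} [MeasurableSpace Ω]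
    {μ : Measure Ω} [IsProbabilityMeasure μ] {β : ι → Type*} [∀ i, MeasurableSpace (β i)]
    {f : ∀ i, Ω → β i} (c : ∀ i, Set (β i) → ENNReal)
    (h : ∀ (S : Finset ι) (A : ∀ i, Set (β i)), (∀ i ∈ S, MeasurableSet (A i)) →
      μ (⋂ i ∈ S, f i ⁻¹' A i) = ∏ i ∈ S, c i (A i)) :
    iIndepFun f μ := by
  classical
  refine iIndepFun_iff_measure_inter_preimage_eq_mul.2 fun S A hA => ?_
  rw [h S A hA]
  refine Finset.prod_congr rfl fun i hi => ?_
  simpa using (h {i} A (by simpa using hA i hi)).symm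

theorem DependsOn.eq_comp_updateFinset_restrict {ι δ : Type*} {E : ι → Type*} [DecidableEq ι]
    {φ : (Π i, E i) → δ} {U : Finset ι} (hφ : DependsOn φ U) (z₀ : Π i, E i) :
    φ = (fun y => φ (Function.updateFinset z₀ U y)) ∘ U.restrict :=
  funext fun z => hφ fun i hi => by simp [Function.updateFinset, Finset.mem_coe.1 hi]

theorem ProbabilityTheory.iIndepFun.indepFun_of_dependsOn {ι β γ : Type*} {E : ι → Type*}
    [∀ i, MeasurableSpace (E i)] [MeasurableSpace β] [MeasurableSpace γ]
    {μ : Measure (Π i, E i)} [IsProbabilityMeasure μ] (h : iIndepFun (fun i z => z i) μ)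
    {S T : Finset ι} (hST : Disjoint S T) {f : (Π i, E i) → β} {g : (Π i, E i) → γ}
    (hf : Measurable f) (hg : Measurable g) (hfS : DependsOn f S) (hgT : DependsOn g T) :
    IndepFun f g μ := by
  classical
  obtain ⟨z₀⟩ := nonempty_of_isProbabilityMeasure μ
  rw [hfS.eq_comp_updateFinset_restrict z₀, hgT.eq_comp_updateFinset_restrict z₀]
  exact (h.indepFun_finset S T hST fun i => measurable_pi_apply i).comp
    (hf.comp measurable_updateFinset) (hg.comp measurable_updateFinset)

def IsEquidistributed {X : Type*} [TopologicalSpace X] [MeasurableSpace X] (μ : Measure X)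
    (x : ℕ → X) : Prop :=
  ∀ φ : X → ℝ, Continuous φ →
    Tendsto (fun N : ℕ => (∑ j ∈ Finset.Icc 1 N, φ (x j)) / N) atTop (𝓝 (∫ y, φ y ∂μ))

section Cylinders

variable {ι : Type*} {E : ι → Set ℝ} {μ : Measure (Π i, E i)} {ν : ι → Measure ℝ}
  {x : ℕ → Π i, E i} {F : (Π i, E i) → ℝ} {S T : Finset ι}

def IsProductOnCylinders (μ : Measure (Π i, E i)) (ν : ι → Measure ℝ) : Prop :=
  ∀ (S : Finset ι) (A : ι → Set ℝ), (∀ i ∈ S, MeasurableSet (A i)) →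
    μ {z | ∀ i ∈ S, (z i : ℝ) ∈ A i} = ∏ i ∈ S, ν i (A i)

theorem measurableSet_cylinder (S : Finset ι) {A : ι → Set ℝ}
    (hA : ∀ i ∈ S, MeasurableSet (A i)) :
    MeasurableSet {z : Π i, E i | ∀ i ∈ S, (z i : ℝ) ∈ A i} := by
  simp only [ofPred_forall]
  exact .biInter S.countable_toSet fun i hi =>
    measurableSet_preimage (measurable_subtype_coe.comp (measurable_pi_apply i)) (hA i hi)

theorem IsProductOnCylinders.isProbabilityMeasure [IsProbabilityMeasure μ]
    (hμ : IsProductOnCylinders μ ν) (i : ι) : IsProbabilityMeasure (ν i) :=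
  ⟨by simpa using (hμ {i} (fun _ => univ) fun _ _ => .univ).symm⟩

theorem IsProductOnCylinders.iIndepFun_eval [IsProbabilityMeasure μ]
    (hE : ∀ i, MeasurableSet (E i)) (hμ : IsProductOnCylinders μ ν) :
    iIndepFun (fun i (z : Π i, E i) => z i) μ := by
  refine iIndepFun_of_measure_iInter_preimage_eq_prod (fun i B => ν i (Subtype.val '' B))
    fun S B hB => ?_
  rw [← hμ S _ fun i hi => (hE i).subtype_image (hB i hi)]
  congr 1
  ext z
  simp [Subtype.val_injective.mem_set_image]

theorem integral_prod_le_measure_cylinder [IsProbabilityMeasure μ] (S : Finset ι)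
    {g : ι → ℝ → ℝ} (hg : ∀ i t, g i t ∈ Icc 0 1) {A : ι → Set ℝ}
    (hA : ∀ i ∈ S, MeasurableSet (A i)) (hgA : ∀ i, EqOn (g i) 0 (A i)ᶜ)
    (hμ : IsProductOnCylinders μ ν) :
    ∫ z, ∏ i ∈ S, g i (z i) ∂μ ≤ (∏ i ∈ S, ν i (A i)).toReal := by
  set C := {z : Π i, E i | ∀ i ∈ S, (z i : ℝ) ∈ A i}
  have hC : MeasurableSet C := measurableSet_cylinder S hA
  have hle (z : Π i, E i) : ∏ i ∈ S, g i (z i) ≤ C.indicator 1 z := by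
    by_cases hz : z ∈ C
    · rw [indicator_of_mem hz]
      exact Finset.prod_le_one (fun i _ => (hg i _).1) fun i _ => (hg i _).2
    · obtain ⟨i, hi, hzi⟩ : ∃ i ∈ S, (z i : ℝ) ∉ A i := by simpa [C] using hz
      rw [indicator_of_notMem hz, Finset.prod_eq_zero hi (hgA i hzi)]
  calc ∫ z, ∏ i ∈ S, g i (z i) ∂μ ≤ ∫ z, C.indicator 1 z ∂μ :=
        integral_mono_of_nonneg (.of_forall fun z => Finset.prod_nonneg fun i _ => (hg i _).1)
          ((integrable_const 1).indicator hC) (.of_forall hle)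
    _ = _ := by rw [integral_indicator_one hC, measureReal_def, hμ S A hA]

theorem limsup_sum_filter_div_le_of_pos [Countable ι] [IsProbabilityMeasure μ]
    (hE : ∀ i, MeasurableSet (E i)) (hμ : IsProductOnCylinders μ ν) (hx : IsEquidistributed μ x)
    (hFc : Continuous F) (hF0 : 0 ≤ F) (hST : Disjoint S T) (hFT : DependsOn F T) (ω : ι → ℝ)
    (δ : ℝ) {η : ℝ} (hη : 0 < η) :
    limsup (fun N : ℕ => (∑ j ∈ (Finset.Icc 1 N).filter
        (fun j => ∀ i ∈ S, |(x j i : ℝ) - ω i| ≤ δ), F (x j)) / N) atTop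
      ≤ (∏ i ∈ S, ν i (Icc (ω i - δ - η) (ω i + δ + η))).toReal * ∫ z, F z ∂μ := by
  choose g hgc hg01 hg1 hg0 using fun i => exists_continuous_cutoff (ω i) δ hη
  set Φ : (Π i, E i) → ℝ := fun z => ∏ i ∈ S, g i (z i)
  have hΦc : Continuous Φ := continuous_finsetProd _ fun i _ => (hgc i).comp (by fun_prop)
  have hΦS : DependsOn Φ S := fun z w h => Finset.prod_congr rfl fun i hi => by rw [h i hi]
  have hΦ1 (j : ℕ) (hj : ∀ i ∈ S, |(x j i : ℝ) - ω i| ≤ δ) : Φ (x j) = 1 :=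
    Finset.prod_eq_one fun i hi =>
      hg1 i (mem_Icc_iff_abs_le.1 (by rw [abs_sub_comm]; exact hj i hi))
  have hindep : IndepFun Φ F μ := (hμ.iIndepFun_eval hE).indepFun_of_dependsOn hST
    hΦc.measurable hFc.measurable hΦS hFT
  calc _ ≤ ∫ z, Φ z * F z ∂μ := limsup_sum_filter_div_le_integral hF0
        (fun z => Finset.prod_nonneg fun i _ => (hg01 i _).1) hΦ1 (hx _ (hΦc.mul hFc))
    _ = (∫ z, Φ z ∂μ) * ∫ z, F z ∂μ := hindep.integral_mul_eq_mul_integral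
        hΦc.measurable.aestronglyMeasurable hFc.measurable.aestronglyMeasurable
    _ ≤ _ := mul_le_mul_of_nonneg_right (integral_prod_le_measure_cylinder S hg01
        (fun _ _ => measurableSet_Icc) hg0 hμ) (integral_nonneg hF0)

theorem limsup_sum_filter_div_le [Countable ι] [IsProbabilityMeasure μ]
    (hE : ∀ i, MeasurableSet (E i)) (hμ : IsProductOnCylinders μ ν) (hx : IsEquidistributed μ x)
    (hFc : Continuous F) (hF0 : 0 ≤ F) (hST : Disjoint S T) (hFT : DependsOn F T) (ω : ι → ℝ)
    (δ : ℝ) :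
    limsup (fun N : ℕ => (∑ j ∈ (Finset.Icc 1 N).filter
        (fun j => ∀ i ∈ S, |(x j i : ℝ) - ω i| ≤ δ), F (x j)) / N) atTop
      ≤ (∏ i ∈ S, (ν i (Icc (ω i - δ) (ω i + δ))).toReal) * ∫ z, F z ∂μ := by
  have := hμ.isProbabilityMeasure
  have hlim : Tendsto (fun η : ℝ => (∏ i ∈ S, ν i (Icc (ω i - δ - η) (ω i + δ + η))).toReal *
      ∫ z, F z ∂μ) (𝓝[>] 0) (𝓝 ((∏ i ∈ S, (ν i (Icc (ω i - δ) (ω i + δ))).toReal) *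
      ∫ z, F z ∂μ)) := by
    simp only [ENNReal.toReal_prod]
    exact (tendsto_finsetProd _ fun i _ => (ENNReal.tendsto_toReal (measure_ne_top _ _)).comp
      (tendsto_measure_Icc_sub_add _ _)).mul_const _
  exact ge_of_tendsto hlim (eventually_nhdsWithin_of_forall fun η hη =>
    limsup_sum_filter_div_le_of_pos hE hμ hx hFc hF0 hST hFT ω δ hη)

end Cylinders

theorem rpow_neg_lt_half_of_two_rpow_lt {p r : ℝ} (hr : r < 1 / 4)
    (hp : (2 : ℝ) ^ ((1 : ℝ) / (1 / 4 - r)) < p) : p ^ (-(1 / 4 - r)) < 1 / 2 := by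
  have hc : 0 < 1 / 4 - r := by linarith
  have h2 : (2 : ℝ) < p ^ (1 / 4 - r) := by
    have := Real.rpow_lt_rpow (by positivity) hp hc
    rwa [← Real.rpow_mul zero_le_two, one_div_mul_cancel hc.ne', Real.rpow_one] at this
  rw [Real.rpow_neg ((Real.rpow_nonneg zero_le_two _).trans hp.le), ← one_div]
  exact one_div_lt_one_div_of_lt two_pos h2

theorem norm_cpow_sub_mul_cpow_lt_one {p : ℕ} {r l : ℝ} {s : ℂ} (hr : r < 1 / 4)
    (hp : (2 : ℝ) ^ ((1 : ℝ) / (1 / 4 - r)) < p) (hs : s ∈ Metric.closedBall (3 / 4 : ℂ) r)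
    (hl : |l| ≤ np p) :
    ‖(p : ℂ) ^ (-(2 * s)) - l * (p : ℂ) ^ (-s)‖ < 1 := by
  have hr0 : 0 ≤ r := Metric.nonempty_closedBall.1 ⟨s, hs⟩
  have hp1 : (1 : ℝ) ≤ p :=
    (Real.one_le_rpow one_le_two (one_div_pos.2 (by linarith)).le).trans hp.le
  have hp0 : (0 : ℝ) < p := one_pos.trans_le hp1
  have hσ : 3 / 4 - r ≤ s.re := by
    have := (Complex.abs_re_le_norm (s - 3 / 4)).trans (by simpa [dist_eq_norm] using hs)
    rw [Complex.sub_re] at this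
    norm_num at this
    linarith [(abs_le.1 this).1]
  have hmono {a b : ℝ} (hab : a ≤ b) : (p : ℝ) ^ a ≤ (p : ℝ) ^ b :=
    Real.rpow_le_rpow_of_exponent_le hp1 hab
  set t := (p : ℝ) ^ (-(1 / 4 - r))
  have ht : t < 1 / 2 := rpow_neg_lt_half_of_two_rpow_lt hr hp
  have ht0 : 0 ≤ t := by positivity
  have hsq : t * t = (p : ℝ) ^ (-(1 / 4 - r) + -(1 / 4 - r)) := (Real.rpow_add hp0 _ _).symm
  have hnorm (z : ℂ) : ‖(p : ℂ) ^ z‖ = (p : ℝ) ^ z.re := by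
    rw [← Complex.ofReal_natCast, Complex.norm_cpow_eq_rpow_re_of_pos hp0]
  have h1 : ‖(l : ℂ) * (p : ℂ) ^ (-s)‖ ≤ t + t * t := calc
    ‖(l : ℂ) * (p : ℂ) ^ (-s)‖ ≤ np p * (p : ℝ) ^ (-s.re) := by
      rw [norm_mul, Complex.norm_real, Real.norm_eq_abs, hnorm, Complex.neg_re]
      gcongr
    _ = (p : ℝ) ^ (1 / 2 + -s.re) + (p : ℝ) ^ (-1 / 2 + -s.re) := by
      rw [np, add_mul, Real.rpow_add hp0, Real.rpow_add hp0]
    _ ≤ t + t * t := add_le_add (hmono (by linarith)) (hsq ▸ hmono (by linarith))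
  have h2 : ‖(p : ℂ) ^ (-(2 * s))‖ ≤ t * t := by
    rw [hnorm, hsq]
    exact hmono (by simp; linarith)
  calc ‖(p : ℂ) ^ (-(2 * s)) - l * (p : ℂ) ^ (-s)‖
      ≤ t * t + (t + t * t) := (norm_sub_le _ _).trans (add_le_add h2 h1)
    _ < 1 := by nlinarith

abbrev PrimeBox : Type := (p : Nat.Primes) → Icc (-(np (p : ℕ))) (np (p : ℕ))

theorem continuous_Ffun {r Y : ℝ} (X₁ : ℝ) (hr : r < 1 / 4)
    (hY : (2 : ℝ) ^ ((1 : ℝ) / (1 / 4 - r)) < Y) : Continuous (Ffun r Y X₁) := by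
  refine (isCompact_closedBall _ _).continuous_sSup_of_continuousOn
    (continuousOn_finsetSum _ fun p hp => ?_).norm
  obtain ⟨-, hp, hYp, -⟩ := Finset.mem_filter.1 hp
  have hp0 : (p : ℂ) ≠ 0 := Nat.cast_ne_zero.2 hp.ne_zero
  simp only [dif_pos hp]
  have hcpow {f : PrimeBox × ℂ → ℂ} (hf : Continuous f) : Continuous fun q => (p : ℂ) ^ f q :=
    hf.const_cpow (Or.inl hp0)
  refine ContinuousOn.clog (Continuous.continuousOn ?_) fun q hq => ?_
  · fun_prop
  rw [show ∀ a b : ℂ, 1 - a + b = 1 + (b - a) from fun _ _ => by ring]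
  exact Complex.mem_slitPlane_of_norm_lt_one (norm_cpow_sub_mul_cpow_lt_one hr (hY.trans hYp)
    hq.2 (abs_le.2 (q.1 ⟨p, hp⟩).2))

theorem Ffun_nonneg (r Y X₁ : ℝ) (x : PrimeBox) : 0 ≤ Ffun r Y X₁ x :=
  Real.sSup_nonneg <| forall_mem_image.2 fun _ _ => norm_nonneg _

noncomputable def primesLe (Y : ℝ) : Finset Nat.Primes :=
  ((Finset.range (⌊Y⌋₊ + 1)).filter fun p : ℕ => p.Prime ∧ (p : ℝ) ≤ Y).subtype Nat.Prime

theorem mem_primesLe {Y : ℝ} {q : Nat.Primes} : q ∈ primesLe Y ↔ (q : ℝ) ≤ Y := by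
  refine (Finset.mem_subtype (p := Nat.Prime)).trans ?_
  simp only [Finset.mem_filter, Finset.mem_range]
  exact ⟨fun h => h.2.2, fun h => ⟨Nat.lt_succ_of_le (Nat.le_floor h), q.2, h⟩⟩

theorem prod_primesLe {M : Type*} [CommMonoid M] (Y : ℝ) (f : ℕ → M) :
    ∏ q ∈ primesLe Y, f q
      = ∏ p ∈ (Finset.range (⌊Y⌋₊ + 1)).filter (fun p : ℕ => p.Prime ∧ (p : ℝ) ≤ Y), f p := by
  refine (Finset.prod_subtype_eq_prod_filter (p := Nat.Prime) f).trans ?_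
  rw [Finset.filter_true_of_mem fun p hp => (Finset.mem_filter.1 hp).2.1]

theorem dependsOn_Ffun (r Y X₁ : ℝ) :
    DependsOn (Ffun r Y X₁) ↑(primesLe X₁ \ primesLe Y) := by
  intro x y h
  refine congrArg (fun f : ℂ → ℝ => sSup (f '' _))
    (funext fun s => congrArg norm (Finset.sum_congr rfl fun p hp => ?_))
  obtain ⟨-, hp, hYp, hpX⟩ := Finset.mem_filter.1 hp
  have hmem : (⟨p, hp⟩ : Nat.Primes) ∈ primesLe X₁ \ primesLe Y :=
    Finset.mem_sdiff.2 ⟨mem_primesLe.2 hpX, mt mem_primesLe.1 hYp.not_ge⟩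
  rw [dif_pos hp, dif_pos hp, h _ hmem]

theorem stmt4_general
    (μ : Measure ((p : Nat.Primes) → Set.Icc (-(np (p : ℕ))) (np (p : ℕ))))
    (hprob : IsProbabilityMeasure μ)
    (hcyl : ∀ (S : Finset Nat.Primes) (A : Nat.Primes → Set ℝ),
      (∀ p ∈ S, MeasurableSet (A p)) →
      μ {x | ∀ p ∈ S, (x p : ℝ) ∈ A p} = ∏ p ∈ S, μp (p : ℕ) (A p))
    (x : ℕ → (p : Nat.Primes) → Set.Icc (-(np (p : ℕ))) (np (p : ℕ)))
    (hequi : ∀ φ : ((p : Nat.Primes) → Set.Icc (-(np (p : ℕ))) (np (p : ℕ))) → ℝ,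
      Continuous φ →
      Tendsto (fun N : ℕ => (∑ j ∈ Finset.Icc 1 N, φ (x j)) / N) atTop (nhds (∫ y, φ y ∂μ)))
    (r : ℝ) (hr : r < 1 / 4)
    (Y X₁ : ℝ) (hY : (2 : ℝ) ^ ((1 : ℝ) / (1 / 4 - r)) < Y)
    (δ : ℝ)
    (ω : ℕ → ℝ) :
    Continuous (Ffun r Y X₁) ∧
    limsup (fun N : ℕ =>
        (∑ j ∈ (Finset.Icc 1 N).filter (fun j => ∀ (p : ℕ) (hp : p.Prime),
            (p : ℝ) ≤ Y → |(x j ⟨p, hp⟩ : ℝ) - ω p| ≤ δ), Ffun r Y X₁ (x j)) / N) atTop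
      ≤ (∏ p ∈ (Finset.range (⌊Y⌋₊ + 1)).filter (fun p : ℕ => p.Prime ∧ (p : ℝ) ≤ Y),
          (μp p (Set.Icc (ω p - δ) (ω p + δ))).toReal) * ∫ y, Ffun r Y X₁ y ∂μ := by
  have := hprob
  have hF := continuous_Ffun X₁ hr hY
  have hbound := limsup_sum_filter_div_le (fun _ => measurableSet_Icc) hcyl hequi hF
    (Ffun_nonneg r Y X₁) Finset.disjoint_sdiff (dependsOn_Ffun r Y X₁) (fun p => ω p) δ
  rw [prod_primesLe Y fun p => (μp p (Icc (ω p - δ) (ω p + δ))).toReal] at hbound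
  refine ⟨hF, ?_⟩
  convert hbound using 6 with N j
  exact ⟨fun h q hq => h q q.2 (mem_primesLe.1 hq),
    fun h p hp hpY => h ⟨p, hp⟩ (mem_primesLe.2 hpY)⟩

/-- Let `X = ∏_p [-n(p), n(p)]`, `μ = ⊗_p μ_p` the product probability
measure, and `(x j)` a sequence in `X` equidistributed with respect to `μ`. Fix
`r ∈ (0, 1/4)`, the disc `K = {|s - 3/4| ≤ r}` and reals `2^{1/(1/4-r)} < Y < X₁`. Then
`F x = max_{s ∈ K} |∑_{Y < p ≤ X₁} Log (1 - x(p) p^{-s} + p^{-2s})|` is a continuous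
function on `X`, and for every `δ > 0` and `ω p ∈ [-2,2]` (primes `p ≤ Y`),
`limsup_N (1/N) ∑_{j ≤ N, |x j p - ω p| ≤ δ ∀ p ≤ Y} F (x j)
  ≤ (∏_{p ≤ Y} μ_p [ω p - δ, ω p + δ]) · ∫ F dμ`. -/
theorem stmt4
    (μ : Measure ((p : Nat.Primes) → Set.Icc (-(np (p : ℕ))) (np (p : ℕ))))
    (hprob : IsProbabilityMeasure μ)
    (hcyl : ∀ (S : Finset Nat.Primes) (A : Nat.Primes → Set ℝ),
      (∀ p ∈ S, MeasurableSet (A p)) →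
      μ {x | ∀ p ∈ S, (x p : ℝ) ∈ A p} = ∏ p ∈ S, μp (p : ℕ) (A p))
    (x : ℕ → (p : Nat.Primes) → Set.Icc (-(np (p : ℕ))) (np (p : ℕ)))
    (hequi : ∀ φ : ((p : Nat.Primes) → Set.Icc (-(np (p : ℕ))) (np (p : ℕ))) → ℝ,
      Continuous φ →
      Tendsto (fun N : ℕ => (∑ j ∈ Finset.Icc 1 N, φ (x j)) / N) atTop (nhds (∫ y, φ y ∂μ)))
    (r : ℝ) (hr0 : 0 < r) (hr : r < 1 / 4)
    (Y X₁ : ℝ) (hY : (2 : ℝ) ^ ((1 : ℝ) / (1 / 4 - r)) < Y) (hYX : Y < X₁)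
    (δ : ℝ) (hδ : 0 < δ)
    (ω : ℕ → ℝ) (hω : ∀ p : ℕ, p.Prime → (p : ℝ) ≤ Y → ω p ∈ Set.Icc (-2 : ℝ) 2) :
    Continuous (Ffun r Y X₁) ∧
    limsup (fun N : ℕ =>
        (∑ j ∈ (Finset.Icc 1 N).filter (fun j => ∀ (p : ℕ) (hp : p.Prime),
            (p : ℝ) ≤ Y → |(x j ⟨p, hp⟩ : ℝ) - ω p| ≤ δ), Ffun r Y X₁ (x j)) / N) atTop
      ≤ (∏ p ∈ (Finset.range (⌊Y⌋₊ + 1)).filter (fun p : ℕ => p.Prime ∧ (p : ℝ) ≤ Y),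
          (μp p (Set.Icc (ω p - δ) (ω p + δ))).toReal) * ∫ y, Ffun r Y X₁ y ∂μ :=
  stmt4_general μ hprob hcyl x hequi r hr Y X₁ hY δ ω
end

section
/- For every prime p, the measure μ_p is a probability measure; that is, ∫_{−2}^{2} (1/(2π)) · (1+p) · √(4 − x²)/((p^{1/2} + p^{−1/2})² − x²) dx = 1. -/
/-!
With `a = n(p) = √p + 1/√p` and `b = √p - 1/√p` we have `a² = b² + 4`, and then
`arcsin (x / 2) - (b / a) arcsin (b x / (2 √(a² - x²)))` is a primitive of `√(4 - x²) / (a² - x²)`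
that is continuous on `[-2, 2]`. Its values at `±2` give `∫ = π (1 - b / a) = 2π / (1 + p)`.
-/

open Real Set

section Primitive

variable {a b x : ℝ}

lemma hasDerivAt_arcsin_div_two (hx : x ∈ Ioo (-2 : ℝ) 2) :
    HasDerivAt (fun y => arcsin (y / 2)) (1 / √(4 - x ^ 2)) x := by
  have hsqrt : √(1 - (x / 2) ^ 2) = √(4 - x ^ 2) / 2 := by
    rw [show 1 - (x / 2) ^ 2 = (4 - x ^ 2) / 2 ^ 2 by ring, sqrt_div' _ (by positivity),
      sqrt_sq zero_le_two]
  have h4 : 0 < √(4 - x ^ 2) := sqrt_pos.2 (by nlinarith [hx.1, hx.2])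
  refine ((hasDerivAt_arcsin (x := x / 2) (by intro h; linarith [hx.1])
    (by intro h; linarith [hx.2])).comp x ((hasDerivAt_id' x).div_const 2)).congr_deriv ?_
  rw [hsqrt]
  field_simp

lemma hasDerivAt_mul_div_sqrt_sq_sub_sq (hx : x ^ 2 < a ^ 2) :
    HasDerivAt (fun y => b * y / (2 * √(a ^ 2 - y ^ 2)))
      (b * a ^ 2 / (2 * √(a ^ 2 - x ^ 2) ^ 3)) x := by
  have hw : 0 < √(a ^ 2 - x ^ 2) := sqrt_pos.2 (by linarith)
  have hw2 : √(a ^ 2 - x ^ 2) ^ 2 = a ^ 2 - x ^ 2 := sq_sqrt (by linarith)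
  have hsqrt : HasDerivAt (fun y => √(a ^ 2 - y ^ 2)) (1 / (2 * √(a ^ 2 - x ^ 2)) * -(2 * x)) x :=
    (hasDerivAt_sqrt (by linarith)).comp x (by simpa using (hasDerivAt_pow 2 x).const_sub (a ^ 2))
  refine (((hasDerivAt_id' x).const_mul b).div (hsqrt.const_mul 2) (by positivity)).congr_deriv ?_
  field_simp
  linear_combination b * hw2

lemma hasDerivAt_arcsin_mul_div_sqrt (ha : 0 < a) (hab : a ^ 2 = b ^ 2 + 4)
    (hx : x ∈ Ioo (-2 : ℝ) 2) :
    HasDerivAt (fun y => arcsin (b * y / (2 * √(a ^ 2 - y ^ 2))))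
      (a * b / ((a ^ 2 - x ^ 2) * √(4 - x ^ 2))) x := by
  have h4 : 0 < 4 - x ^ 2 := by nlinarith [hx.1, hx.2]
  have hax : x ^ 2 < a ^ 2 := by nlinarith
  have hw : 0 < √(a ^ 2 - x ^ 2) := sqrt_pos.2 (by linarith)
  have ht2 : √(4 - x ^ 2) ^ 2 = 4 - x ^ 2 := sq_sqrt h4.le
  have hw2 : √(a ^ 2 - x ^ 2) ^ 2 = a ^ 2 - x ^ 2 := sq_sqrt (by linarith)
  set u := b * x / (2 * √(a ^ 2 - x ^ 2))
  -- `4 (a² - x²) - b² x² = a² (4 - x²)` because `a² = b² + 4`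
  have hu : 1 - u ^ 2 = (a * √(4 - x ^ 2) / (2 * √(a ^ 2 - x ^ 2))) ^ 2 := by
    simp only [u]
    field_simp
    linear_combination x ^ 2 * hab + 4 * hw2 - a ^ 2 * ht2
  have hu_pos : 0 < 1 - u ^ 2 := hu ▸ by positivity
  refine ((hasDerivAt_arcsin (x := u) (by intro h; simp [h] at hu_pos)
    (by intro h; simp [h] at hu_pos)).comp x
    (hasDerivAt_mul_div_sqrt_sq_sub_sq hax)).congr_deriv ?_
  rw [hu, sqrt_sq (by positivity)]
  field_simp
  rw [hw2]
  field_simp [(sub_pos.2 hax).ne']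

lemma hasDerivAt_arcsin_sub_arcsin (ha : 0 < a) (hab : a ^ 2 = b ^ 2 + 4)
    (hx : x ∈ Ioo (-2 : ℝ) 2) :
    HasDerivAt (fun y => arcsin (y / 2) - b / a * arcsin (b * y / (2 * √(a ^ 2 - y ^ 2))))
      (√(4 - x ^ 2) / (a ^ 2 - x ^ 2)) x := by
  have h4 : 0 < 4 - x ^ 2 := by nlinarith [hx.1, hx.2]
  have hax : 0 < a ^ 2 - x ^ 2 := by nlinarith [sq_nonneg b]
  have ht2 : √(4 - x ^ 2) ^ 2 = 4 - x ^ 2 := sq_sqrt h4.le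
  refine ((hasDerivAt_arcsin_div_two hx).sub
    ((hasDerivAt_arcsin_mul_div_sqrt ha hab hx).const_mul (b / a))).congr_deriv ?_
  field_simp
  linear_combination hab - ht2

end Primitive

lemma integral_sqrt_four_sub_sq_div_sq_sub_sq {a b : ℝ} (ha : 0 < a) (hb : 0 < b)
    (hab : a ^ 2 = b ^ 2 + 4) :
    ∫ x in (-2 : ℝ)..2, √(4 - x ^ 2) / (a ^ 2 - x ^ 2) = π * (1 - b / a) := by
  have hpos : ∀ x ∈ Icc (-2 : ℝ) 2, 0 < a ^ 2 - x ^ 2 := fun x hx => by nlinarith [hx.1, hx.2]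
  have hcont : ContinuousOn
      (fun y => arcsin (y / 2) - b / a * arcsin (b * y / (2 * √(a ^ 2 - y ^ 2)))) (Icc (-2) 2) := by
    refine (continuous_arcsin.comp_continuousOn (by fun_prop)).sub
      (continuousOn_const.mul (continuous_arcsin.comp_continuousOn ?_))
    exact (by fun_prop : Continuous fun y : ℝ => b * y).continuousOn.div (by fun_prop)
      fun x hx => by have := hpos x hx; positivity
  have hint : IntervalIntegrable (fun x => √(4 - x ^ 2) / (a ^ 2 - x ^ 2))
      MeasureTheory.volume (-2) 2 := by
    refine ContinuousOn.intervalIntegrable ?_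
    rw [uIcc_of_le (by norm_num)]
    exact (by fun_prop : Continuous fun y : ℝ => √(4 - y ^ 2)).continuousOn.div (by fun_prop)
      fun x hx => (hpos x hx).ne'
  have hend : √(a ^ 2 - 2 ^ 2) = b := by
    rw [show a ^ 2 - 2 ^ 2 = b ^ 2 by linarith, sqrt_sq hb.le]
  rw [intervalIntegral.integral_eq_sub_of_hasDerivAt_of_le (by norm_num) hcont
    (fun x hx => hasDerivAt_arcsin_sub_arcsin ha hab hx) hint]
  simp only [neg_sq, hend]
  field_simp
  rw [arcsin_one, arcsin_neg_one]
  ring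

lemma integral_kestenMcKay_density_eq_one {q : ℝ} (hq : 1 < q) :
    ∫ x in (-2 : ℝ)..2, 1 / (2 * π) * (1 + q) * √(4 - x ^ 2) /
      ((q ^ ((1 : ℝ) / 2) + q ^ (-(1 : ℝ) / 2)) ^ 2 - x ^ 2) = 1 := by
  set s := √q
  have hs : 1 < s := by simpa [s] using sqrt_lt_sqrt zero_le_one hq
  have hs2 : s ^ 2 = q := sq_sqrt (by linarith)
  have hn : q ^ ((1 : ℝ) / 2) + q ^ (-(1 : ℝ) / 2) = s + s⁻¹ := by
    rw [neg_div, rpow_neg (by linarith), ← sqrt_eq_rpow]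
  have hab : (s + s⁻¹) ^ 2 = (s - s⁻¹) ^ 2 + 4 := by
    field_simp
    ring
  have hb : 0 < s - s⁻¹ := sub_pos.2 ((inv_lt_one₀ (by linarith)).2 hs |>.trans hs)
  simp_rw [hn, mul_div_assoc]
  rw [intervalIntegral.integral_const_mul,
    integral_sqrt_four_sub_sq_div_sq_sub_sq (by positivity) hb hab, ← hs2]
  field_simp
  ring

/-- For every prime `p`, the measure `μ_p` with density
`(1/(2π)) (1+p) √(4-x²)/(n(p)² - x²)` on `[-2,2]` (and zero outside), where
`n(p) = p^{1/2} + p^{-1/2}`, is a probability measure: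
`∫_{-2}^{2} (1/(2π)) (1+p) √(4-x²)/(n(p)² - x²) dx = 1`. -/
theorem stmt8 (p : ℕ) (hp : p.Prime) :
    ∫ x in (-2 : ℝ)..2,
      1 / (2 * Real.pi) * (1 + (p : ℝ)) * Real.sqrt (4 - x ^ 2) /
        (((p : ℝ) ^ ((1 : ℝ) / 2) + (p : ℝ) ^ (-(1 : ℝ) / 2)) ^ 2 - x ^ 2) = 1 :=
  integral_kestenMcKay_density_eq_one (by exact_mod_cast hp.one_lt)
end
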